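/- arXiv:2407.19793 — 3 statements merged into one kernel-verified Lean document; each statement's English description precedes it below -/
import Mathlib

section
/- Let S = {a_1, ..., a_n} be a finite multiset of positive integers and let G(S) be the graph constructed from S by the reduction. If S can be partitioned into two sub-multisets S_1 and S_2 with equal sums, then G(S) admits a Neighborhood Balanced Coloring: color v_1 blue and v_2 red, color the other two vertices of the K_{2,2} red and blue respectively, and for each a_i-pack with a_i in S_1 color its base vertex blue, all its numeric vertices red, and exactly half of its support vertices blue and half red, and symmetrically (base red, numeric vertices blue, half the support vertices of each color) for each pack with a_i in S_2. -/
/-- A *Neighborhood Balanced Coloring* of a graph `G`: a red/blue coloring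
(`true` = red, `false` = blue) such that every vertex has as many red
(open) neighbors as blue neighbors. -/
def IsNBC {V : Type*} (G : SimpleGraph V) (c : V → Bool) : Prop :=
  ∀ v : V, Nat.card {w : V // G.Adj v w ∧ c w = true}
         = Nat.card {w : V // G.Adj v w ∧ c w = false}

/-- Vertex type of an `m`-pack: for `m ≥ 2` one base vertex (`Sum.inl`),
`2m` support vertices (`Sum.inr (Sum.inl (i, b))`) and `m` numeric vertices
(`Sum.inr (Sum.inr i)`); a `1`-pack is a single numeric vertex. -/
def PackV : ℕ → Type
  | 0 => Empty
  | 1 => Unit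
  | (m + 2) => Unit ⊕ ((Fin (m + 2) × Bool) ⊕ Fin (m + 2))

/-- Base relation generating the edges of an `m`-pack: the base vertex is
adjacent to every support vertex, and the support vertex `(i, b)` is adjacent
to the numeric vertex `i` (so every numeric vertex is adjacent to exactly two
support vertices, and every support vertex to exactly one numeric vertex).
A `1`-pack has no edges. -/
def packRel : (m : ℕ) → PackV m → PackV m → Prop
  | 0 => fun x _ => x.elim
  | 1 => fun _ _ => False
  | (_ + 2) => fun x y =>
      match x, y with
      | Sum.inl _, Sum.inr (Sum.inl _) => True
      | Sum.inr (Sum.inl (i, _)), Sum.inr (Sum.inr j) => i = j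
      | _, _ => False

/-- The `m`-pack graph. -/
def Pack (m : ℕ) : SimpleGraph (PackV m) := SimpleGraph.fromRel (packRel m)

/-- The `i`-th numeric vertex of an `m`-pack. -/
def packNumeric : (m : ℕ) → Fin m → PackV m
  | 0, i => i.elim0
  | 1, _ => ()
  | (_ + 2), i => Sum.inr (Sum.inr i)

/-- The predicate selecting the numeric vertices of an `m`-pack. -/
def isNumericV : (m : ℕ) → PackV m → Prop
  | 0 => fun _ => False
  | 1 => fun _ => True
  | (_ + 2) => fun x => match x with | Sum.inr (Sum.inr _) => True | _ => False

/-- The predicate selecting the base vertex of an `m`-pack. -/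
def isBaseV : (m : ℕ) → PackV m → Prop
  | 0 => fun _ => False
  | 1 => fun _ => False
  | (_ + 2) => fun x => match x with | Sum.inl _ => True | _ => False

/-- The predicate selecting the support vertices of an `m`-pack. -/
def isSupportV : (m : ℕ) → PackV m → Prop
  | 0 => fun _ => False
  | 1 => fun _ => False
  | (_ + 2) => fun x => match x with | Sum.inr (Sum.inl _) => True | _ => False

/-- Vertex type of the graph `G(S)` built from the multiset
`S = {a 0, …, a (n-1)}`: the four vertices of a `K_{2,2}`
(`Sum.inl (Sum.inl 0)` and `Sum.inl (Sum.inl 1)` being the two vertices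
`v₁, v₂` of one part) together with a disjoint `a i`-pack for each `i`. -/
def GSV (n : ℕ) (a : Fin n → ℕ) : Type :=
  (Fin 2 ⊕ Fin 2) ⊕ (Σ i : Fin n, PackV (a i))

/-- Base relation generating the edges of `G(S)`: the `K_{2,2}` edges, the
internal edges of each pack, and the edges joining `v₁` and `v₂` to every
numeric vertex of every pack. -/
def GSRel (n : ℕ) (a : Fin n → ℕ) : GSV n a → GSV n a → Prop
  | Sum.inl (Sum.inl _), Sum.inl (Sum.inr _) => True
  | Sum.inl (Sum.inl _), Sum.inr ⟨i, p⟩ => isNumericV (a i) p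
  | Sum.inr ⟨i, p⟩, Sum.inr ⟨j, q⟩ => ∃ h : i = j, packRel (a j) (h ▸ p) q
  | _, _ => False

/-- The graph `G(S)` of the reduction. -/
def GS (n : ℕ) (a : Fin n → ℕ) : SimpleGraph (GSV n a) :=
  SimpleGraph.fromRel (GSRel n a)

/-- The `j`-th numeric vertex of the `i`-th pack, as a vertex of `G(S)`. -/
def numVert (n : ℕ) (a : Fin n → ℕ) (i : Fin n) (j : Fin (a i)) : GSV n a :=
  Sum.inr ⟨i, packNumeric (a i) j⟩

/-!
An `m`-pack is balanced on its own under the colouring with numeric vertices of colour `t`,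
base vertex of colour `!t` and support vertex `(j, b)` of colour `b`: at every vertex some
involution of the pack preserves the neighbourhood and flips all colours on it (flipping the
bit of every support vertex, or swapping the base vertex with the numeric vertex next to a
given support vertex). Inside `G(S)` a numeric vertex also sees `v₁` (blue) and `v₂` (red),
and the two other `K_{2,2}` vertices see exactly `v₁` and `v₂`. Finally `v₁` and `v₂` see one
red and one blue `K_{2,2}` vertex, `∑_{i ∈ T} aᵢ` red numeric vertices and `∑_{i ∉ T} aᵢ` blue
ones, and these sums agree by hypothesis.
-/

lemma Nat.card_subtype_sum {α β : Type*} [Finite α] [Finite β] (p : α ⊕ β → Prop) :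
    Nat.card {x // p x} = Nat.card {a // p (Sum.inl a)} + Nat.card {b // p (Sum.inr b)} := by
  rw [Nat.card_congr Equiv.subtypeSum, Nat.card_sum]

lemma Nat.card_subtype_sigma {ι : Type*} [Fintype ι] {β : ι → Type*} [∀ i, Finite (β i)]
    (p : (Σ i, β i) → Prop) :
    Nat.card {x // p x} = ∑ i, Nat.card {b : β i // p ⟨i, b⟩} := by
  rw [← Nat.card_sigma]
  exact Nat.card_congr
    { toFun := fun x => ⟨x.1.1, x.1.2, x.2⟩
      invFun := fun y => ⟨⟨y.1, y.2.1⟩, y.2.2⟩ }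

lemma Nat.card_and_eq_true_eq_card_and_eq_false_of_involutive {V : Type*} {P : V → Prop}
    {c : V → Bool} (f : V → V) (hf : Function.Involutive f) (hP : ∀ w, P w → P (f w))
    (hc : ∀ w, P w → c (f w) = !c w) :
    Nat.card {w // P w ∧ c w = true} = Nat.card {w // P w ∧ c w = false} :=
  Nat.card_congr
    { toFun := fun w => ⟨f w, hP _ w.2.1, by rw [hc _ w.2.1, w.2.2]; rfl⟩
      invFun := fun w => ⟨f w, hP _ w.2.1, by rw [hc _ w.2.1, w.2.2]; rfl⟩
      left_inv := fun w => Subtype.ext (hf w)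
      right_inv := fun w => Subtype.ext (hf w) }

lemma card_fin_two_decide_eq (k₀ : Fin 2) (b : Bool) :
    Fintype.card {k : Fin 2 // decide (k = k₀) = b} = 1 := by
  revert k₀ b
  decide

-- `GSV` and `PackV` only name sum types; unfolding them reducibly lets `simp` apply the
-- `Sum` and `Sigma` API to their elements.
attribute [reducible] GSV PackV

instance PackV.instFinite : (m : ℕ) → Finite (PackV m)
  | 0 => inferInstanceAs (Finite Empty)
  | 1 => inferInstanceAs (Finite Unit)
  | m + 2 => inferInstanceAs (Finite (Unit ⊕ ((Fin (m + 2) × Bool) ⊕ Fin (m + 2))))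

def packColor (t : Bool) : (m : ℕ) → PackV m → Bool
  | 0, x => x.elim
  | 1, _ => t
  | _ + 2, Sum.inl _ => !t
  | _ + 2, Sum.inr (Sum.inl (_, b)) => b
  | _ + 2, Sum.inr (Sum.inr _) => t

lemma packColor_of_isNumericV {t : Bool} : ∀ {m : ℕ} {p : PackV m}, isNumericV m p →
    packColor t m p = t
  | 1, _, _ => rfl
  | _ + 2, Sum.inr (Sum.inr _), _ => rfl

lemma packColor_of_isBaseV {t : Bool} : ∀ {m : ℕ} {p : PackV m}, isBaseV m p →
    packColor t m p = !t
  | _ + 2, Sum.inl _, _ => rfl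

lemma isNumericV_packNumeric : ∀ (m : ℕ) (j : Fin m), isNumericV m (packNumeric m j)
  | 1, _ => trivial
  | _ + 2, _ => trivial

lemma card_isNumericV : ∀ m : ℕ, Nat.card {p : PackV m // isNumericV m p} = m
  | 0 => Nat.card_of_isEmpty
  | 1 => by simp [isNumericV]
  | m + 2 => by simp [Nat.card_subtype_sum, isNumericV]

lemma card_isNumericV_packColor (t b : Bool) (m : ℕ) :
    Nat.card {p : PackV m // isNumericV m p ∧ packColor t m p = b} = if t = b then m else 0 := by
  have h : ∀ p : PackV m, isNumericV m p ∧ packColor t m p = b ↔ isNumericV m p ∧ t = b :=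
    fun p => and_congr_right fun hp => by rw [packColor_of_isNumericV hp]
  rw [Nat.card_congr (Equiv.subtypeEquivRight h)]
  split_ifs with htb <;> simp [htb, card_isNumericV]

def supportFlip {m : ℕ} : PackV (m + 2) → PackV (m + 2)
  | Sum.inl u => Sum.inl u
  | Sum.inr (Sum.inl (j, b)) => Sum.inr (Sum.inl (j, !b))
  | Sum.inr (Sum.inr j) => Sum.inr (Sum.inr j)

lemma supportFlip_involutive (m : ℕ) : Function.Involutive (supportFlip (m := m)) := by
  rintro (_ | (⟨j, b⟩ | j)) <;> simp [supportFlip]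

lemma card_isSupportV_packColor_false_eq_true (t : Bool) : ∀ m : ℕ,
    Nat.card {p : PackV m // isSupportV m p ∧ packColor t m p = false}
      = Nat.card {p : PackV m // isSupportV m p ∧ packColor t m p = true}
  | 0 | 1 => by simp [isSupportV]
  | m + 2 => by
    refine (Nat.card_and_eq_true_eq_card_and_eq_false_of_involutive supportFlip
      (supportFlip_involutive m) ?_ ?_).symm
    all_goals rintro (_ | (⟨j, b⟩ | j)) h <;> simp_all [isSupportV, supportFlip, packColor]

lemma isNBC_pack_packColor (t : Bool) : ∀ m : ℕ, IsNBC (Pack m) (packColor t m)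
  | 0 => fun p => isEmptyElim p
  | 1 => fun _ => by simp [Pack, packRel]
  | m + 2 => by
    rintro (_ | (⟨j, b⟩ | j))
    case inr.inl =>
      refine Nat.card_and_eq_true_eq_card_and_eq_false_of_involutive
        (Equiv.swap (Sum.inl ()) (Sum.inr (Sum.inr j))) (Equiv.swap_apply_self _ _) ?_ ?_
      all_goals rintro (_ | (⟨j, b⟩ | j)) h <;> simp_all [Pack, packRel, packColor]
    all_goals
      refine Nat.card_and_eq_true_eq_card_and_eq_false_of_involutive supportFlip
        (supportFlip_involutive m) ?_ ?_
      all_goals rintro (_ | (⟨j, b⟩ | j)) h <;> simp_all [Pack, packRel, supportFlip, packColor]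

section GS

variable {n : ℕ} {a : Fin n → ℕ}

lemma GS_adj_iff {v w : GSV n a} :
    (GS n a).Adj v w ↔ v ≠ w ∧ (GSRel n a v w ∨ GSRel n a w v) :=
  SimpleGraph.fromRel_adj _ _ _

lemma GS_adj_inr_inr_self {i : Fin n} {p q : PackV (a i)} :
    (GS n a).Adj (Sum.inr ⟨i, p⟩) (Sum.inr ⟨i, q⟩) ↔ (Pack (a i)).Adj p q := by
  simp [GS_adj_iff, GSRel, Pack]

lemma GS_not_adj_inr_inr_of_ne {i j : Fin n} (h : i ≠ j) {p : PackV (a i)} {q : PackV (a j)} :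
    ¬ (GS n a).Adj (Sum.inr ⟨i, p⟩) (Sum.inr ⟨j, q⟩) := by
  simp [GS_adj_iff, GSRel, h, Ne.symm h]

lemma card_adj_GS_eq (c : GSV n a → Bool) (v : GSV n a) (b : Bool) :
    Nat.card {w // (GS n a).Adj v w ∧ c w = b} =
      Nat.card {k // (GS n a).Adj v (Sum.inl (Sum.inl k)) ∧ c (Sum.inl (Sum.inl k)) = b} +
      Nat.card {k // (GS n a).Adj v (Sum.inl (Sum.inr k)) ∧ c (Sum.inl (Sum.inr k)) = b} +
      ∑ i, Nat.card {p // (GS n a).Adj v (Sum.inr ⟨i, p⟩) ∧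
        c (Sum.inr ⟨i, p⟩) = b} := by
  rw [Nat.card_subtype_sum, Nat.card_subtype_sum, Nat.card_subtype_sigma]

lemma sum_card_adj_GS_inr (c : GSV n a → Bool) (i : Fin n) (p : PackV (a i)) (b : Bool) :
    ∑ j, Nat.card {q // (GS n a).Adj (Sum.inr ⟨i, p⟩) (Sum.inr ⟨j, q⟩) ∧
        c (Sum.inr ⟨j, q⟩) = b}
      = Nat.card {q // (Pack (a i)).Adj p q ∧ c (Sum.inr ⟨i, q⟩) = b} := by
  rw [Finset.sum_eq_single i (fun j _ hj => by simp [GS_not_adj_inr_inr_of_ne (Ne.symm hj)])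
    (by simp)]
  simp only [GS_adj_inr_inr_self]

def partitionColoring (n : ℕ) (a : Fin n → ℕ) (T : Finset (Fin n)) : GSV n a → Bool
  | Sum.inl (Sum.inl k) => decide (k = 1)
  | Sum.inl (Sum.inr k) => decide (k = 0)
  | Sum.inr ⟨i, p⟩ => packColor (decide (i ∈ T)) (a i) p

variable (T : Finset (Fin n))

lemma card_adj_inl_inl_partitionColoring (k : Fin 2) (b : Bool) :
    Nat.card {w // (GS n a).Adj (Sum.inl (Sum.inl k)) w ∧ partitionColoring n a T w = b}
      = 1 + ∑ i, if decide (i ∈ T) = b then a i else 0 := by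
  rw [card_adj_GS_eq]
  simp [GS_adj_iff, GSRel, partitionColoring, card_fin_two_decide_eq, card_isNumericV_packColor]

lemma partitionColoring_balanced_inl_inl (hT : ∑ i ∈ T, a i = ∑ i ∈ Tᶜ, a i) (k : Fin 2) :
    Nat.card {w // (GS n a).Adj (Sum.inl (Sum.inl k)) w ∧ partitionColoring n a T w = true}
      = Nat.card {w // (GS n a).Adj (Sum.inl (Sum.inl k)) w ∧
          partitionColoring n a T w = false} := by
  rw [card_adj_inl_inl_partitionColoring, card_adj_inl_inl_partitionColoring]
  simp [Finset.sum_ite, hT, Finset.filter_notMem_eq_sdiff, Finset.compl_eq_univ_sdiff]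

lemma partitionColoring_balanced_inl_inr (k : Fin 2) :
    Nat.card {w // (GS n a).Adj (Sum.inl (Sum.inr k)) w ∧ partitionColoring n a T w = true}
      = Nat.card {w // (GS n a).Adj (Sum.inl (Sum.inr k)) w ∧
          partitionColoring n a T w = false} := by
  rw [card_adj_GS_eq, card_adj_GS_eq]
  simp [GS_adj_iff, GSRel, partitionColoring]

lemma partitionColoring_balanced_inr (i : Fin n) (p : PackV (a i)) :
    Nat.card {w // (GS n a).Adj (Sum.inr ⟨i, p⟩) w ∧ partitionColoring n a T w = true}
      = Nat.card {w // (GS n a).Adj (Sum.inr ⟨i, p⟩) w ∧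
          partitionColoring n a T w = false} := by
  have hpack := isNBC_pack_packColor (decide (i ∈ T)) (a i) p
  rw [card_adj_GS_eq, card_adj_GS_eq, sum_card_adj_GS_inr, sum_card_adj_GS_inr]
  by_cases hp : isNumericV (a i) p <;> simp [GS_adj_iff, GSRel, partitionColoring, hp, hpack]

lemma isNBC_partitionColoring (hT : ∑ i ∈ T, a i = ∑ i ∈ Tᶜ, a i) :
    IsNBC (GS n a) (partitionColoring n a T) := by
  rintro ((k | k) | ⟨i, p⟩)
  exacts [partitionColoring_balanced_inl_inl T hT k, partitionColoring_balanced_inl_inr T k,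
    partitionColoring_balanced_inr T i p]

lemma partitionColoring_inr (i : Fin n) (p : PackV (a i)) :
    partitionColoring n a T (Sum.inr ⟨i, p⟩) = packColor (decide (i ∈ T)) (a i) p :=
  rfl

end GS

theorem partition_gives_GS_NBC_general (n : ℕ) (a : Fin n → ℕ)
    (T : Finset (Fin n)) (hT : ∑ i ∈ T, a i = ∑ i ∈ Tᶜ, a i) :
    ∃ c : GSV n a → Bool, IsNBC (GS n a) c ∧
      c (Sum.inl (Sum.inl 0)) = false ∧
      c (Sum.inl (Sum.inl 1)) = true ∧
      c (Sum.inl (Sum.inr 0)) = true ∧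
      c (Sum.inl (Sum.inr 1)) = false ∧
      (∀ i ∈ T,
        (∀ p : PackV (a i), isBaseV (a i) p → c (Sum.inr ⟨i, p⟩) = false) ∧
        (∀ j : Fin (a i), c (numVert n a i j) = true) ∧
        Nat.card {p : PackV (a i) // isSupportV (a i) p ∧ c (Sum.inr ⟨i, p⟩) = false}
          = Nat.card {p : PackV (a i) // isSupportV (a i) p ∧ c (Sum.inr ⟨i, p⟩) = true}) ∧
      (∀ i ∈ Tᶜ,
        (∀ p : PackV (a i), isBaseV (a i) p → c (Sum.inr ⟨i, p⟩) = true) ∧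
        (∀ j : Fin (a i), c (numVert n a i j) = false) ∧
        Nat.card {p : PackV (a i) // isSupportV (a i) p ∧ c (Sum.inr ⟨i, p⟩) = false}
          = Nat.card {p : PackV (a i) // isSupportV (a i) p ∧ c (Sum.inr ⟨i, p⟩) = true}) := by
  refine ⟨partitionColoring n a T, isNBC_partitionColoring T hT, rfl, rfl, rfl, rfl,
    fun i hi => ⟨fun p hp => ?_, fun j => ?_, card_isSupportV_packColor_false_eq_true _ _⟩,
    fun i hi => ⟨fun p hp => ?_, fun j => ?_, card_isSupportV_packColor_false_eq_true _ _⟩⟩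
  · rw [partitionColoring_inr, packColor_of_isBaseV hp, decide_eq_true hi, Bool.not_true]
  · rw [numVert, partitionColoring_inr, packColor_of_isNumericV (isNumericV_packNumeric _ j),
      decide_eq_true hi]
  · rw [partitionColoring_inr, packColor_of_isBaseV hp, decide_eq_false (Finset.mem_compl.1 hi),
      Bool.not_false]
  · rw [numVert, partitionColoring_inr, packColor_of_isNumericV (isNumericV_packNumeric _ j),
      decide_eq_false (Finset.mem_compl.1 hi)]

/-- **Completeness of the reduction.** If the multiset `S = {a 0, …, a (n-1)}`
of positive integers can be partitioned into two sub-multisets (indexed by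
`T` and `Tᶜ`) with equal sums, then `G(S)` admits a Neighborhood Balanced
Coloring (`true` = red, `false` = blue) of the described shape: `v₁` is blue,
`v₂` is red, the other two vertices of the `K_{2,2}` are red and blue
respectively; for `i ∈ T` the `a i`-pack has a blue base vertex, red numeric
vertices, and exactly half of its support vertices blue and half red; and
symmetrically (red base, blue numeric vertices, half of the support vertices
of each color) for `i ∉ T`. -/
theorem partition_gives_GS_NBC (n : ℕ) (a : Fin n → ℕ) (ha : ∀ i, 0 < a i)
    (T : Finset (Fin n)) (hT : ∑ i ∈ T, a i = ∑ i ∈ Tᶜ, a i) :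
    ∃ c : GSV n a → Bool, IsNBC (GS n a) c ∧
      c (Sum.inl (Sum.inl 0)) = false ∧
      c (Sum.inl (Sum.inl 1)) = true ∧
      c (Sum.inl (Sum.inr 0)) = true ∧
      c (Sum.inl (Sum.inr 1)) = false ∧
      (∀ i ∈ T,
        (∀ p : PackV (a i), isBaseV (a i) p → c (Sum.inr ⟨i, p⟩) = false) ∧
        (∀ j : Fin (a i), c (numVert n a i j) = true) ∧
        Nat.card {p : PackV (a i) // isSupportV (a i) p ∧ c (Sum.inr ⟨i, p⟩) = false}
          = Nat.card {p : PackV (a i) // isSupportV (a i) p ∧ c (Sum.inr ⟨i, p⟩) = true}) ∧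
      (∀ i ∈ Tᶜ,
        (∀ p : PackV (a i), isBaseV (a i) p → c (Sum.inr ⟨i, p⟩) = true) ∧
        (∀ j : Fin (a i), c (numVert n a i j) = false) ∧
        Nat.card {p : PackV (a i) // isSupportV (a i) p ∧ c (Sum.inr ⟨i, p⟩) = false}
          = Nat.card {p : PackV (a i) // isSupportV (a i) p ∧ c (Sum.inr ⟨i, p⟩) = true}) :=
  partition_gives_GS_NBC_general n a T hT
end

section
/- Let n > 1 and consider any graph H that contains an n-pack as an induced subgraph in which every support vertex of the pack has degree exactly 2 in H (its only neighbors are the pack's base vertex and its corresponding numeric vertex). In any Neighborhood Balanced Coloring of H, every numeric vertex of the pack receives the color opposite to the color of the base vertex; in particular, all n numeric vertices of the pack receive the same color. -/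
/-- The base vertex of an `(m+2)`-pack. -/
def packBase (m : ℕ) : PackV (m + 2) := Sum.inl ()

/-- The support vertex of an `(m+2)`-pack attached to the numeric vertex `j`,
on side `b`. -/
def packSupport (m : ℕ) (j : Fin (m + 2)) (b : Bool) : PackV (m + 2) :=
  Sum.inr (Sum.inl (j, b))

/-!
Each support vertex of the pack has exactly two neighbours in `H`: the base vertex and its
numeric vertex. Balance at the support vertex forces these two to get different colors, so every
numeric vertex gets the color opposite to the base.
-/

namespace SimpleGraph

variable {V : Type*} {G : SimpleGraph V}

theorem neighborSet_eq_pair_of_card_eq_two {p u v : V}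
    (hdeg : Nat.card (G.neighborSet p) = 2) (hu : G.Adj p u) (hv : G.Adj p v) (huv : u ≠ v) :
    G.neighborSet p = {u, v} := by
  have hfin : (G.neighborSet p).Finite := Nat.finite_of_card_ne_zero (by omega)
  refine (Set.eq_of_subset_of_ncard_le ?_ ?_ hfin).symm
  · exact Set.insert_subset hu (Set.singleton_subset_iff.mpr hv)
  · rw [← Nat.card_coe_set_eq, hdeg, Set.ncard_pair huv]

end SimpleGraph

theorem IsNBC.ne_of_neighborSet_eq_pair {V : Type*} {G : SimpleGraph V} {c : V → Bool}
    (hc : IsNBC G c) {p u v : V} (huv : u ≠ v) (hN : G.neighborSet p = {u, v}) :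
    c u ≠ c v := by
  intro hcol
  have hcount (b : Bool) :
      Nat.card {w // G.Adj p w ∧ c w = b} = if c u = b then 2 else 0 := by
    have hset : {w | G.Adj p w ∧ c w = b} = if c u = b then {u, v} else ∅ := by
      ext w
      rw [Set.mem_ofPred_eq, ← G.mem_neighborSet, hN]
      split_ifs with hb <;> aesop
    rw [← Set.coe_ofPred, Nat.card_coe_set_eq, hset]
    split_ifs
    · exact Set.ncard_pair huv
    · exact Set.ncard_empty V
  have hbal := hc p
  rw [hcount, hcount] at hbal
  cases h : c u <;> simp [h] at hbal

section Pack

variable (m : ℕ) (j : Fin (m + 2)) (b : Bool)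

theorem Pack.adj_support_base : (Pack (m + 2)).Adj (packSupport m j b) (packBase m) :=
  (SimpleGraph.fromRel_adj _ _ _).mpr ⟨Sum.inr_ne_inl, Or.inr trivial⟩

theorem Pack.adj_support_numeric :
    (Pack (m + 2)).Adj (packSupport m j b) (packNumeric (m + 2) j) :=
  (SimpleGraph.fromRel_adj _ _ _).mpr ⟨Sum.inr_injective.ne Sum.inl_ne_inr, Or.inl rfl⟩

theorem packBase_ne_packNumeric : packBase m ≠ packNumeric (m + 2) j :=
  Sum.inl_ne_inr

theorem isSupportV_packSupport : isSupportV (m + 2) (packSupport m j b) :=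
  trivial

theorem neighborSet_map_packSupport {W : Type*} {H : SimpleGraph W} (f : Pack (m + 2) ↪g H)
    (hdeg : Nat.card (H.neighborSet (f (packSupport m j b))) = 2) :
    H.neighborSet (f (packSupport m j b)) = {f (packBase m), f (packNumeric (m + 2) j)} :=
  SimpleGraph.neighborSet_eq_pair_of_card_eq_two hdeg
    (f.map_adj_iff.mpr (Pack.adj_support_base m j b))
    (f.map_adj_iff.mpr (Pack.adj_support_numeric m j b))
    (f.injective.ne (packBase_ne_packNumeric m j))

end Pack

theorem pack_numeric_opposite_base_general (m : ℕ) {W : Type*}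
    (H : SimpleGraph W) (f : Pack (m + 2) ↪g H)
    (hdeg : ∀ p : PackV (m + 2), isSupportV (m + 2) p →
      Nat.card {w : W // H.Adj (f p) w} = 2)
    (c : W → Bool) (hc : IsNBC H c) :
    (∀ j : Fin (m + 2), c (f (packNumeric (m + 2) j)) ≠ c (f (packBase m))) ∧
    (∀ j k : Fin (m + 2), c (f (packNumeric (m + 2) j)) = c (f (packNumeric (m + 2) k))) := by
  have hopposite (j : Fin (m + 2)) : c (f (packNumeric (m + 2) j)) ≠ c (f (packBase m)) :=
    (hc.ne_of_neighborSet_eq_pair (f.injective.ne (packBase_ne_packNumeric m j))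
      (neighborSet_map_packSupport m j true f
        (hdeg _ (isSupportV_packSupport m j true)))).symm
  exact ⟨hopposite, fun j k =>
    (Bool.eq_not.mpr (hopposite j)).trans (Bool.eq_not.mpr (hopposite k)).symm⟩

/-- **Remark 1.** Let `n = m + 2 > 1` and let `H` be any finite graph containing
the `n`-pack as an induced subgraph (via the graph embedding `f`) in which
every support vertex of the pack has degree exactly `2` in `H`. Then in any
Neighborhood Balanced Coloring `c` of `H`, every numeric vertex of the pack
receives the color opposite to that of the base vertex; in particular all `n`
numeric vertices receive the same color. -/
theorem pack_numeric_opposite_base (m : ℕ) {W : Type*} [Fintype W]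
    (H : SimpleGraph W) (f : Pack (m + 2) ↪g H)
    (hdeg : ∀ p : PackV (m + 2), isSupportV (m + 2) p →
      Nat.card {w : W // H.Adj (f p) w} = 2)
    (c : W → Bool) (hc : IsNBC H c) :
    (∀ j : Fin (m + 2), c (f (packNumeric (m + 2) j)) ≠ c (f (packBase m))) ∧
    (∀ j k : Fin (m + 2), c (f (packNumeric (m + 2) j)) = c (f (packNumeric (m + 2) k))) :=
  pack_numeric_opposite_base_general m H f hdeg c hc
end

section
/- For every integer n > 1, the n-pack graph admits a Neighborhood Balanced Coloring: color the base vertex blue, all n numeric vertices red, and, for each numeric vertex, color one of its two support vertices blue and the other red. -/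
/-!
Color the base vertex blue, the numeric vertices red and the support vertex `(j, b)` with `b`.
Each neighborhood then carries an involution that swaps the two colors: for the base vertex
and for a numeric vertex, exchange the two support vertices `(j, true)` and `(j, false)`; for
the support vertex `(j, b)`, exchange its only two neighbors, the base vertex and the numeric
vertex `j`.
-/

theorem Nat.card_and_eq_true_eq_card_and_eq_false {α : Type*} {p : α → Prop} {c : α → Bool}
    {σ : α → α} (hσ : Function.Involutive σ) (h : ∀ a, p a → p (σ a) ∧ c (σ a) = !c a) :
    Nat.card {a // p a ∧ c a = true} = Nat.card {a // p a ∧ c a = false} := by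
  have hmaps : ∀ {b : Bool} (a : α), p a ∧ c a = !b → p (σ a) ∧ c (σ a) = b := by
    rintro b a ⟨hpa, hca⟩
    exact ⟨(h a hpa).1, by rw [(h a hpa).2, hca, Bool.not_not]⟩
  exact Nat.card_congr
    { toFun := fun a => ⟨σ a, hmaps a.1 a.2⟩
      invFun := fun a => ⟨σ a, hmaps a.1 a.2⟩
      left_inv := fun a => Subtype.ext (hσ a)
      right_inv := fun a => Subtype.ext (hσ a) }

theorem isNBC_of_forall_exists_involutive {V : Type*} {G : SimpleGraph V} {c : V → Bool}
    (h : ∀ v, ∃ σ : V → V, Function.Involutive σ ∧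
      ∀ w, G.Adj v w → G.Adj v (σ w) ∧ c (σ w) = !c w) :
    IsNBC G c := fun v =>
  let ⟨_, hσ, hswap⟩ := h v
  Nat.card_and_eq_true_eq_card_and_eq_false hσ hswap

namespace Pack

variable (m : ℕ)

instance : DecidableEq (PackV (m + 2)) :=
  inferInstanceAs (DecidableEq (Unit ⊕ ((Fin (m + 2) × Bool) ⊕ Fin (m + 2))))

def coloring : PackV (m + 2) → Bool
  | Sum.inl _ => false
  | Sum.inr (Sum.inl (_, b)) => b
  | Sum.inr (Sum.inr _) => true

def flipSides : PackV (m + 2) → PackV (m + 2)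
  | Sum.inr (Sum.inl (j, b)) => Sum.inr (Sum.inl (j, !b))
  | x => x

@[simp] theorem coloring_base : coloring m (packBase m) = false := rfl

@[simp] theorem coloring_numeric (j : Fin (m + 2)) :
    coloring m (packNumeric (m + 2) j) = true := rfl

theorem flipSides_involutive : Function.Involutive (flipSides m) := by
  rintro (_ | ⟨_, _ | _⟩ | _) <;> rfl

theorem adj_iff (x y : PackV (m + 2)) :
    (Pack (m + 2)).Adj x y ↔ packRel (m + 2) x y ∨ packRel (m + 2) y x := by
  rw [Pack, SimpleGraph.fromRel_adj, and_iff_right_iff_imp]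
  rintro h rfl
  rcases x with _ | ⟨_, _⟩ | _ <;> simp [packRel] at h

-- Lets `simp` use the injectivity of `Sum.inl`/`Sum.inr`, which it does not apply through the
-- definition `PackV`.
theorem _root_.PackV.eq_iff {m : ℕ} (x y : Unit ⊕ ((Fin (m + 2) × Bool) ⊕ Fin (m + 2))) :
    @Eq (PackV (m + 2)) x y ↔ x = y := Iff.rfl

theorem adj_base_iff (w : PackV (m + 2)) :
    (Pack (m + 2)).Adj (packBase m) w ↔ ∃ j b, w = packSupport m j b := by
  rw [adj_iff]
  rcases w with _ | ⟨_, _⟩ | _ <;> simp [packRel, packSupport, packBase, PackV.eq_iff]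

theorem adj_support_iff (j : Fin (m + 2)) (b : Bool) (w : PackV (m + 2)) :
    (Pack (m + 2)).Adj (packSupport m j b) w ↔ w = packBase m ∨ w = packNumeric (m + 2) j := by
  rw [adj_iff]
  rcases w with _ | ⟨_, _⟩ | _ <;>
    simp [packRel, packSupport, packBase, packNumeric, PackV.eq_iff, eq_comm]

theorem adj_numeric_iff (j : Fin (m + 2)) (w : PackV (m + 2)) :
    (Pack (m + 2)).Adj (packNumeric (m + 2) j) w ↔ ∃ b, w = packSupport m j b := by
  rw [adj_iff]
  rcases w with _ | ⟨_, _⟩ | _ <;>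
    simp [packRel, packSupport, packNumeric, PackV.eq_iff, eq_comm]

theorem flipSides_swaps_coloring_at_base (w : PackV (m + 2))
    (hw : (Pack (m + 2)).Adj (packBase m) w) :
    (Pack (m + 2)).Adj (packBase m) (flipSides m w) ∧
      coloring m (flipSides m w) = !coloring m w := by
  obtain ⟨j, b, rfl⟩ := (adj_base_iff m w).1 hw
  exact ⟨(adj_base_iff m _).2 ⟨j, !b, rfl⟩, rfl⟩

theorem flipSides_swaps_coloring_at_numeric (j : Fin (m + 2)) (w : PackV (m + 2))
    (hw : (Pack (m + 2)).Adj (packNumeric (m + 2) j) w) :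
    (Pack (m + 2)).Adj (packNumeric (m + 2) j) (flipSides m w) ∧
      coloring m (flipSides m w) = !coloring m w := by
  obtain ⟨b, rfl⟩ := (adj_numeric_iff m j w).1 hw
  exact ⟨(adj_numeric_iff m j _).2 ⟨!b, rfl⟩, rfl⟩

theorem swap_swaps_coloring_at_support (j : Fin (m + 2)) (b : Bool) (w : PackV (m + 2))
    (hw : (Pack (m + 2)).Adj (packSupport m j b) w) :
    (Pack (m + 2)).Adj (packSupport m j b) (Equiv.swap (packBase m) (packNumeric (m + 2) j) w) ∧
      coloring m (Equiv.swap (packBase m) (packNumeric (m + 2) j) w) = !coloring m w := by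
  rcases (adj_support_iff m j b w).1 hw with rfl | rfl <;> simp [adj_support_iff]

theorem isNBC_coloring : IsNBC (Pack (m + 2)) (coloring m) := by
  refine isNBC_of_forall_exists_involutive fun v => ?_
  rcases v with ⟨⟨⟩⟩ | ⟨j, b⟩ | j
  · exact ⟨flipSides m, flipSides_involutive m, flipSides_swaps_coloring_at_base m⟩
  · exact ⟨_, Equiv.swap_apply_self _ _, swap_swaps_coloring_at_support m j b⟩
  · exact ⟨flipSides m, flipSides_involutive m, flipSides_swaps_coloring_at_numeric m j⟩

end Pack

/-- For every `n = m + 2 > 1`, the `n`-pack admits a Neighborhood Balanced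
Coloring (`true` = red, `false` = blue): the base vertex is blue, all `n`
numeric vertices are red, and for each numeric vertex one of its two support
vertices is blue and the other is red. -/
theorem pack_admits_NBC (m : ℕ) :
    ∃ c : PackV (m + 2) → Bool, IsNBC (Pack (m + 2)) c ∧
      c (packBase m) = false ∧
      (∀ j : Fin (m + 2), c (packNumeric (m + 2) j) = true) ∧
      (∀ j : Fin (m + 2), c (packSupport m j true) ≠ c (packSupport m j false)) :=
  ⟨Pack.coloring m, Pack.isNBC_coloring m, rfl, fun _ => rfl, fun _ => nofun⟩
end
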